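/- For the constrained problem min ‖(A₁ A₂) − (X₁ X₂)‖_F subject to X₁ = A₁ and rank(X₁ X₂) ≤ r with rank(A₁) = k ≤ r, the optimal objective value equals (σ_{r−k+1}² + σ_{r−k+2}² + ⋯)^{1/2}, where σ_i are the singular values of P⊥_{A₁}(A₂). -/

import Mathlib

open Matrix Filter Topology

noncomputable def frobSq {α β : Type*} [Fintype α] [Fintype β] (A : Matrix α β ℝ) : ℝ :=
  ∑ i, ∑ j, (A i j) ^ 2

noncomputable def frob {α β : Type*} [Fintype α] [Fintype β] (A : Matrix α β ℝ) : ℝ :=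
  Real.sqrt (frobSq A)

/-!
Write `P` for the projection onto the column space of `A₁` and `B = (1 - P) A₂ = U S Vᵀ`.
If `rank [A₁ X₂] ≤ r` and `Q` is the projection onto the column space of `[A₁ X₂]`, then
`R = Q - P` is a projection of trace at most `r - k`, and `‖A₂ - X₂‖ ≥ ‖(1 - Q) A₂‖ = ‖(1 - R) B‖`.
For any projection `R` of trace at most `ρ`, `‖(1 - R) B‖² = ∑ (1 - wᵢ) σᵢ²` with
`wᵢ = ‖R uᵢ‖² ∈ [0, 1]` and `∑ wᵢ = trace R ≤ ρ`; as the `σᵢ` decrease, this is smallest when the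
weight sits on the first `ρ` indices, which gives the Eckart–Young tail `∑_{i > ρ} σᵢ²`. It is
attained by `X₂ = P A₂ + R₀ B`, with `R₀` the projection onto the leading `ρ` left singular vectors.
-/

lemma IsStarProjection.mul_mul_star {R : Type*} [Semiring R] [StarRing R] {p u : R}
    (hp : IsStarProjection p) (hu : star u * u = 1) : IsStarProjection (u * p * star u) where
  isIdempotentElem := by
    rw [IsIdempotentElem, mul_assoc, mul_assoc, ← mul_assoc (star u), ← mul_assoc (star u), hu,
      one_mul, ← mul_assoc p, hp.isIdempotentElem.eq, ← mul_assoc]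
  isSelfAdjoint := by
    rw [IsSelfAdjoint, star_mul, star_mul, star_star, hp.isSelfAdjoint.star_eq, mul_assoc]

section Frobenius

variable {α β : Type*} [Fintype α]

lemma frobSq_nonneg [Fintype β] (A : Matrix α β ℝ) : 0 ≤ frobSq A := by
  unfold frobSq
  positivity

lemma frobSq_eq_trace [Fintype β] (A : Matrix α β ℝ) : frobSq A = (Aᵀ * A).trace := by
  simp only [frobSq, trace, diag, mul_apply, transpose_apply, sq]
  exact Finset.sum_comm

lemma diag_transpose_mul_self_nonneg (M : Matrix α β ℝ) (j : β) : 0 ≤ (Mᵀ * M) j j :=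
  Finset.sum_nonneg fun i _ => mul_self_nonneg (M i j)

lemma IsStarProjection.transpose_eq {R : Matrix α α ℝ} (hR : IsStarProjection R) : Rᵀ = R := by
  simpa [star_eq_conjTranspose, conjTranspose_eq_transpose_of_trivial] using
    hR.isSelfAdjoint.star_eq

lemma IsStarProjection.transpose_mul_mul_self {R : Matrix α α ℝ} (hR : IsStarProjection R)
    (M : Matrix α β ℝ) : (R * M)ᵀ * (R * M) = Mᵀ * R * M := by
  rw [transpose_mul, hR.transpose_eq, Matrix.mul_assoc, ← Matrix.mul_assoc R R,
    hR.isIdempotentElem.eq, Matrix.mul_assoc]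

lemma frobSq_mul_le_of_isStarProjection [Fintype β] [DecidableEq α] {R : Matrix α α ℝ}
    (hR : IsStarProjection R) (M : Matrix α β ℝ) : frobSq (R * M) ≤ frobSq M := by
  have hsplit : frobSq M = frobSq (R * M) + frobSq ((1 - R) * M) := by
    rw [frobSq_eq_trace, frobSq_eq_trace, frobSq_eq_trace, hR.transpose_mul_mul_self,
      hR.one_sub.transpose_mul_mul_self, ← trace_add, ← Matrix.add_mul, ← Matrix.mul_add,
      add_sub_cancel, Matrix.mul_one]
  linarith [frobSq_nonneg ((1 - R) * M)]

end Frobenius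

section ColumnSpaceProjection

variable {m n : Type*} [Fintype m] [Fintype n] [DecidableEq n]

lemma isUnit_det_transpose_mul_self_of_rank_eq {A : Matrix m n ℝ}
    (hA : A.rank = Fintype.card n) : IsUnit (Aᵀ * A).det := by
  have hrange : LinearMap.range (Aᵀ * A).mulVecLin = ⊤ := by
    apply Submodule.eq_top_of_finrank_eq
    rw [← Matrix.rank, rank_transpose_mul_self, hA, Module.finrank_fintype_fun_eq_card]
  exact (isUnit_iff_isUnit_det _).mp
    (mulVec_surjective_iff_isUnit.mp (LinearMap.range_eq_top.mp hrange))

/-- The orthogonal projection onto the column space of `A` when `A` has full column rank;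
otherwise the junk inverse `(Aᵀ * A)⁻¹ = 0` makes it `0`. -/
noncomputable def colSpaceProj (A : Matrix m n ℝ) : Matrix m m ℝ := A * (Aᵀ * A)⁻¹ * Aᵀ

lemma colSpaceProj_mul_self {A : Matrix m n ℝ} (hA : A.rank = Fintype.card n) :
    colSpaceProj A * A = A := by
  rw [colSpaceProj, Matrix.mul_assoc, Matrix.mul_assoc,
    nonsing_inv_mul _ (isUnit_det_transpose_mul_self_of_rank_eq hA), Matrix.mul_one]

lemma isStarProjection_colSpaceProj [DecidableEq m] {A : Matrix m n ℝ}
    (hA : A.rank = Fintype.card n) : IsStarProjection (colSpaceProj A) := by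
  refine ⟨?_, ?_⟩
  · rw [IsIdempotentElem]
    nth_rw 2 [colSpaceProj]
    rw [← Matrix.mul_assoc, ← Matrix.mul_assoc, colSpaceProj_mul_self hA, colSpaceProj]
  · rw [IsSelfAdjoint, star_eq_conjTranspose, conjTranspose_eq_transpose_of_trivial, colSpaceProj,
      transpose_mul, transpose_mul, transpose_transpose, transpose_nonsing_inv, transpose_mul,
      transpose_transpose, Matrix.mul_assoc]

lemma trace_colSpaceProj {A : Matrix m n ℝ} (hA : A.rank = Fintype.card n) :
    (colSpaceProj A).trace = Fintype.card n := by
  rw [colSpaceProj, trace_mul_comm, ← Matrix.mul_assoc,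
    mul_nonsing_inv _ (isUnit_det_transpose_mul_self_of_rank_eq hA), trace_one]

end ColumnSpaceProjection

section RankFactorization

variable {K : Type*} [Field K] {m n : Type*} [Fintype n]

lemma exists_rank_factorization (Z : Matrix m n K) :
    ∃ (F : Matrix m (Fin Z.rank) K) (G : Matrix (Fin Z.rank) n K), F.rank = Z.rank ∧ F * G = Z := by
  classical
  let b := Module.finBasisOfFinrankEq K (LinearMap.range Z.mulVecLin) rfl
  have hcol : ∀ j, Z.col j ∈ LinearMap.range Z.mulVecLin := fun j =>
    ⟨Pi.single j 1, mulVec_single_one Z j⟩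
  let F : Matrix m (Fin Z.rank) K := Matrix.of fun i t => (b t : m → K) i
  let G : Matrix (Fin Z.rank) n K := Matrix.of fun t j => b.repr ⟨Z.col j, hcol j⟩ t
  have hFG : F * G = Z := by
    ext i j
    have h := congrArg (fun v : LinearMap.range Z.mulVecLin => (v : m → K) i)
      (b.sum_repr ⟨Z.col j, hcol j⟩)
    simp only [Submodule.coe_sum, Submodule.coe_smul, Finset.sum_apply, Pi.smul_apply,
      smul_eq_mul, col_apply] at h
    rw [← h, mul_apply]
    exact Finset.sum_congr rfl fun t _ => mul_comm _ _
  refine ⟨F, G, le_antisymm ?_ ?_, hFG⟩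
  · simpa using rank_le_card_width F
  · simpa [hFG] using rank_mul_le_left F G

end RankFactorization

lemma exists_isStarProjection_mul_eq_self {m n : Type*} [Fintype m] [DecidableEq m] [Fintype n]
    (Z : Matrix m n ℝ) : ∃ Q : Matrix m m ℝ, IsStarProjection Q ∧ Q * Z = Z ∧ Q.trace = Z.rank := by
  obtain ⟨F, G, hF, hFG⟩ := exists_rank_factorization Z
  have hF' : F.rank = Fintype.card (Fin Z.rank) := by rw [hF, Fintype.card_fin]
  refine ⟨colSpaceProj F, isStarProjection_colSpaceProj hF', ?_, ?_⟩
  · calc colSpaceProj F * Z = colSpaceProj F * F * G := by rw [Matrix.mul_assoc, hFG]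
      _ = Z := by rw [colSpaceProj_mul_self hF', hFG]
  · rw [trace_colSpaceProj hF', Fintype.card_fin]

section Rank

variable {K : Type*} [Field K] {m n : Type*} [Fintype n]

lemma Matrix.rank_add_le (A B : Matrix m n K) : (A + B).rank ≤ A.rank + B.rank := by
  rw [Matrix.rank, Matrix.rank, Matrix.rank, mulVecLin_add]
  exact (Submodule.finrank_mono (LinearMap.range_add_le _ _)).trans
    (Submodule.finrank_add_le_finrank_add_finrank _ _)

lemma rank_fromCols_mul_add_le {k : Type*} [Fintype k] [DecidableEq k] [DecidableEq n]
    (A : Matrix m k K) (G : Matrix k n K) (Y : Matrix m n K) :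
    (fromCols A (A * G + Y)).rank ≤ A.rank + Y.rank := by
  have hsplit : fromCols A (A * G + Y)
      = A * fromCols (1 : Matrix k k K) G + Y * fromCols (0 : Matrix n k K) (1 : Matrix n n K) := by
    rw [mul_fromCols, mul_fromCols, Matrix.mul_one, Matrix.mul_zero, Matrix.mul_one]
    ext i (j | j) <;> simp
  rw [hsplit]
  exact (Matrix.rank_add_le _ _).trans
    (add_le_add (rank_mul_le_left _ _) (rank_mul_le_left _ _))

end Rank

lemma sum_mul_le_sum_of_threshold {ι : Type*} [Fintype ι] [DecidableEq ι] (s : Finset ι)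
    {d w : ι → ℝ} {c : ℝ} (hc : 0 ≤ c) (hd_mem : ∀ i ∈ s, c ≤ d i) (hd_not_mem : ∀ i ∉ s, d i ≤ c)
    (hw0 : 0 ≤ w) (hw1 : w ≤ 1) (hw : ∑ i, w i ≤ s.card) :
    ∑ i, w i * d i ≤ ∑ i ∈ s, d i := by
  -- pointwise, `(w i - [i ∈ s]) * (d i - c) ≤ 0`
  have hpoint : ∀ i, w i * d i ≤ (if i ∈ s then d i else 0) + c * (w i - if i ∈ s then 1 else 0) := by
    intro i
    have hwi0 : 0 ≤ w i := hw0 i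
    have hwi1 : w i ≤ 1 := hw1 i
    by_cases hi : i ∈ s
    · simp only [if_pos hi]
      nlinarith [hd_mem i hi]
    · simp only [if_neg hi]
      nlinarith [hd_not_mem i hi]
  calc ∑ i, w i * d i
      ≤ ∑ i, ((if i ∈ s then d i else 0) + c * (w i - if i ∈ s then 1 else 0)) :=
        Finset.sum_le_sum fun i _ => hpoint i
    _ = ∑ i ∈ s, d i + c * (∑ i, w i - s.card) := by
        rw [Finset.sum_add_distrib, ← Finset.mul_sum, Finset.sum_sub_distrib, Finset.sum_ite_mem,
          Finset.univ_inter, Finset.sum_boole, Finset.filter_mem_eq_inter, Finset.univ_inter]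
    _ ≤ ∑ i ∈ s, d i := by nlinarith

lemma sum_mul_le_sum_lt_of_antitone {m ρ : ℕ} {d w : Fin m → ℝ} (hd : Antitone d) (hd0 : 0 ≤ d)
    (hw0 : 0 ≤ w) (hw1 : w ≤ 1) (hw : ∑ i, w i ≤ ρ) :
    ∑ i, w i * d i ≤ ∑ i : Fin m with i.val < ρ, d i := by
  have hcard : ∑ i, w i ≤ ((Finset.univ.filter fun i : Fin m => i.val < ρ).card : ℝ) := by
    rw [Fin.card_filter_val_lt]
    rcases min_cases m ρ with ⟨h, -⟩ | ⟨h, -⟩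
    · rw [h]
      simpa using Finset.sum_le_sum fun i (_ : i ∈ Finset.univ) => hw1 i
    · rwa [h]
  by_cases hρ : ρ < m
  · refine sum_mul_le_sum_of_threshold _ (hd0 ⟨ρ, hρ⟩) ?_ ?_ hw0 hw1 hcard
    · intro i hi
      simp only [Finset.mem_filter, Finset.mem_univ, true_and] at hi
      exact hd (Fin.le_iff_val_le_val.mpr (show i.val ≤ ρ by omega))
    · intro i hi
      simp only [Finset.mem_filter, Finset.mem_univ, true_and, not_lt] at hi
      exact hd (Fin.le_iff_val_le_val.mpr (show ρ ≤ i.val from hi))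
  · refine sum_mul_le_sum_of_threshold _ le_rfl ?_ ?_ hw0 hw1 hcard
    · exact fun i _ => hd0 i
    · intro i hi
      simp only [Finset.mem_filter, Finset.mem_univ, true_and] at hi
      omega

section EckartYoung

variable {α β γ : Type*} [Fintype α] [Fintype β] [Fintype γ] [DecidableEq α]

lemma frobSq_mul_eq_sum_diag (M : Matrix γ α ℝ) {B : Matrix α β ℝ} {U : Matrix α α ℝ}
    {d : α → ℝ} (hB : B * Bᵀ = U * diagonal d * Uᵀ) :
    frobSq (M * B) = ∑ i, ((M * U)ᵀ * (M * U)) i i * d i := by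
  calc frobSq (M * B) = (Mᵀ * M * (B * Bᵀ)).trace := by
        rw [frobSq_eq_trace, transpose_mul, Matrix.mul_assoc, trace_mul_comm]
        simp only [Matrix.mul_assoc]
    _ = ((M * U)ᵀ * (M * U) * diagonal d).trace := by
        rw [hB, ← Matrix.mul_assoc, trace_mul_comm, transpose_mul]
        simp only [Matrix.mul_assoc]
    _ = _ := by simp only [trace, diag, mul_diagonal]

lemma transpose_mul_one_sub_mul {U : Matrix α α ℝ} (hU : Uᵀ * U = 1) (R : Matrix α α ℝ) :
    Uᵀ * (1 - R) * U = 1 - Uᵀ * R * U := by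
  rw [Matrix.mul_sub, Matrix.sub_mul, Matrix.mul_one, hU]

lemma frobSq_one_sub_mul_eq_sum {B : Matrix α β ℝ} {U : Matrix α α ℝ} {d : α → ℝ}
    (hU : Uᵀ * U = 1) (hB : B * Bᵀ = U * diagonal d * Uᵀ) {R : Matrix α α ℝ}
    (hR : IsStarProjection R) :
    frobSq ((1 - R) * B) = ∑ i, (1 - (Uᵀ * R * U) i i) * d i := by
  rw [frobSq_mul_eq_sum_diag _ hB, hR.one_sub.transpose_mul_mul_self,
    transpose_mul_one_sub_mul hU]
  simp only [Matrix.sub_apply, Matrix.one_apply_eq]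

variable {m : ℕ} {B : Matrix (Fin m) β ℝ} {U : Matrix (Fin m) (Fin m) ℝ} {d : Fin m → ℝ}

lemma sum_tail_le_frobSq_one_sub_mul (hU : Uᵀ * U = 1) (hB : B * Bᵀ = U * diagonal d * Uᵀ)
    (hd : Antitone d) (hd0 : 0 ≤ d) {R : Matrix (Fin m) (Fin m) ℝ} (hR : IsStarProjection R)
    {ρ : ℕ} (htr : R.trace ≤ ρ) :
    ∑ i : Fin m with ρ ≤ i.val, d i ≤ frobSq ((1 - R) * B) := by
  set w : Fin m → ℝ := fun i => (Uᵀ * R * U) i i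
  have hw0 : 0 ≤ w := fun i => by
    have := diag_transpose_mul_self_nonneg (R * U) i
    rwa [hR.transpose_mul_mul_self] at this
  have hw1 : w ≤ 1 := fun i => by
    have := diag_transpose_mul_self_nonneg ((1 - R) * U) i
    rw [hR.one_sub.transpose_mul_mul_self, transpose_mul_one_sub_mul hU, Matrix.sub_apply,
      Matrix.one_apply_eq] at this
    exact sub_nonneg.mp this
  have hw : ∑ i, w i ≤ ρ := by
    calc ∑ i, w i = (Uᵀ * R * U).trace := rfl
      _ = R.trace := by rw [trace_mul_cycle, mul_eq_one_comm.mp hU, Matrix.one_mul]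
      _ ≤ ρ := htr
  have hsplit : ∑ i, d i = ∑ i : Fin m with i.val < ρ, d i + ∑ i : Fin m with ρ ≤ i.val, d i := by
    simpa [not_lt] using
      (Finset.sum_filter_add_sum_filter_not Finset.univ (fun i : Fin m => i.val < ρ) d).symm
  have hbath := sum_mul_le_sum_lt_of_antitone hd hd0 hw0 hw1 hw
  rw [frobSq_one_sub_mul_eq_sum hU hB hR]
  simp only [sub_mul, one_mul, Finset.sum_sub_distrib]
  linarith

end EckartYoung

section LeadingProjection

variable {m : ℕ} {β : Type*} [Fintype β]

/-- When the columns of `U` are the left singular vectors of `B`, ordered by decreasing singular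
value, this is the projection onto the leading `ρ` of them: the best rank-`ρ` projection for `B`. -/
noncomputable def leadingProj (U : Matrix (Fin m) (Fin m) ℝ) (ρ : ℕ) : Matrix (Fin m) (Fin m) ℝ :=
  U * diagonal (fun i => if i.val < ρ then 1 else 0) * Uᵀ

lemma isStarProjection_leadingProj {U : Matrix (Fin m) (Fin m) ℝ} (hU : Uᵀ * U = 1) (ρ : ℕ) :
    IsStarProjection (leadingProj U ρ) := by
  have hdiag : IsStarProjection (diagonal fun i : Fin m => if i.val < ρ then (1 : ℝ) else 0) := by
    refine ⟨?_, ?_⟩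
    · rw [IsIdempotentElem, diagonal_mul_diagonal]
      congr 1
      ext i
      split_ifs <;> simp
    · rw [IsSelfAdjoint, star_eq_conjTranspose, diagonal_conjTranspose]
      simp
  have hstar : star U = Uᵀ := by rw [star_eq_conjTranspose, conjTranspose_eq_transpose_of_trivial]
  rw [leadingProj, ← hstar]
  exact hdiag.mul_mul_star (hstar ▸ hU)

lemma frobSq_one_sub_leadingProj_mul {B : Matrix (Fin m) β ℝ} {U : Matrix (Fin m) (Fin m) ℝ}
    {d : Fin m → ℝ} (hU : Uᵀ * U = 1) (hB : B * Bᵀ = U * diagonal d * Uᵀ) (ρ : ℕ) :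
    frobSq ((1 - leadingProj U ρ) * B) = ∑ i : Fin m with ρ ≤ i.val, d i := by
  have hconj : Uᵀ * leadingProj U ρ * U = diagonal fun i => if i.val < ρ then 1 else 0 := by
    simp only [leadingProj, ← Matrix.mul_assoc, hU, Matrix.one_mul]
    rw [Matrix.mul_assoc, hU, Matrix.mul_one]
  rw [frobSq_one_sub_mul_eq_sum hU hB (isStarProjection_leadingProj hU ρ), hconj, Finset.sum_filter]
  refine Finset.sum_congr rfl fun i _ => ?_
  by_cases h : i.val < ρ <;> simp [h, not_le.mpr]

lemma rank_leadingProj_mul_le (U : Matrix (Fin m) (Fin m) ℝ) (ρ : ℕ) (B : Matrix (Fin m) β ℝ) :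
    (leadingProj U ρ * B).rank ≤ ρ := by
  calc (leadingProj U ρ * B).rank
      ≤ (diagonal fun i : Fin m => if i.val < ρ then (1 : ℝ) else 0).rank := by
        rw [leadingProj, Matrix.mul_assoc, Matrix.mul_assoc]
        exact (rank_mul_le_right _ _).trans (rank_mul_le_left _ _)
    _ ≤ ρ := by
        classical
        rw [rank_diagonal]
        simp only [ne_eq, ite_eq_right_iff, one_ne_zero, imp_false, not_not]
        rw [Fintype.card_subtype, Fin.card_filter_val_lt]
        exact min_le_right m ρ

end LeadingProjection

lemma mul_transpose_of_transpose_mul_self {l m n : Type*} [Fintype m] [Fintype n]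
    [DecidableEq n] (U : Matrix l m ℝ) (S : Matrix m n ℝ) {V : Matrix n n ℝ} (hV : Vᵀ * V = 1) :
    (U * S * Vᵀ) * (U * S * Vᵀ)ᵀ = U * (S * Sᵀ) * Uᵀ := by
  rw [transpose_mul, transpose_mul, transpose_transpose]
  simp only [Matrix.mul_assoc]
  rw [← Matrix.mul_assoc Vᵀ, hV, Matrix.one_mul]

section RectangularDiagonal

variable {m n : ℕ}

lemma mul_transpose_eq_diagonal {S : Matrix (Fin m) (Fin n) ℝ} {s : ℕ → ℝ}
    (hS : ∀ i j, S i j = if (i : ℕ) = (j : ℕ) then s i else 0) :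
    S * Sᵀ = diagonal fun i : Fin m => if i.val < n then s i ^ 2 else 0 := by
  ext i i'
  simp only [mul_apply, transpose_apply, hS, diagonal_apply]
  rw [Fin.sum_univ_eq_sum_range
    (fun k => (if (i : ℕ) = k then s i else 0) * (if (i' : ℕ) = k then s i' else 0)) n]
  simp only [ite_mul, zero_mul, mul_ite, mul_zero, Finset.sum_ite_eq, Finset.mem_range, Fin.ext_iff]
  split_ifs <;> first | omega | simp_all [sq]

lemma antitone_ite_sq {s : ℕ → ℝ} (hs : Antitone s) (hs0 : 0 ≤ s) :
    Antitone fun i : Fin m => if i.val < n then s i ^ 2 else 0 := by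
  intro i j hij
  have hij' : i.val ≤ j.val := hij
  dsimp only
  split_ifs with hj hi
  · exact pow_le_pow_left₀ (hs0 _) (hs hij') 2
  · omega
  · positivity
  · rfl

lemma sum_tail_eq_sum_Icc (f : ℕ → ℝ) (ρ : ℕ) :
    ∑ i : Fin m with ρ ≤ i.val, (if i.val < n then f (i.val + 1) else 0)
      = ∑ i ∈ Finset.Icc (ρ + 1) (min m n), f i := by
  rw [Finset.sum_filter, Fin.sum_univ_eq_sum_range
    (fun i => if ρ ≤ i then (if i < n then f (i + 1) else 0) else 0)]
  calc ∑ i ∈ Finset.range m, (if ρ ≤ i then (if i < n then f (i + 1) else 0) else 0)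
      = ∑ i ∈ Finset.range m with ρ ≤ i ∧ i < n, f (i + 1) := by
        rw [Finset.sum_filter]
        exact Finset.sum_congr rfl fun i _ => by rw [ite_and]
    _ = ∑ i ∈ Finset.Ico ρ (min m n), f (i + 1) := by
        congr 1
        ext i
        simp only [Finset.mem_filter, Finset.mem_range, Finset.mem_Ico, lt_min_iff]
        omega
    _ = ∑ i ∈ Finset.Ico (ρ + 1) (min m n + 1), f i := Finset.sum_Ico_add' f ρ (min m n) 1
    _ = ∑ i ∈ Finset.Icc (ρ + 1) (min m n), f i := by rw [Finset.Ico_add_one_right_eq_Icc]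

end RectangularDiagonal

section ConstrainedLowRank

variable {m k : ℕ} {β : Type*} [Fintype β] {A₁ : Matrix (Fin m) (Fin k) ℝ}
  {A₂ : Matrix (Fin m) β ℝ} {U : Matrix (Fin m) (Fin m) ℝ} {d : Fin m → ℝ}

lemma sum_tail_le_frobSq_sub (hA₁ : A₁.rank = k) (hU : Uᵀ * U = 1)
    (hB : ((1 - colSpaceProj A₁) * A₂) * ((1 - colSpaceProj A₁) * A₂)ᵀ = U * diagonal d * Uᵀ)
    (hd : Antitone d) (hd0 : 0 ≤ d) {r : ℕ} {X₂ : Matrix (Fin m) β ℝ}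
    (hX₂ : (fromCols A₁ X₂).rank ≤ r) :
    ∑ i : Fin m with r - k ≤ i.val, d i ≤ frobSq (A₂ - X₂) := by
  have hA₁' : A₁.rank = Fintype.card (Fin k) := by rw [hA₁, Fintype.card_fin]
  set P := colSpaceProj A₁
  have hP : IsStarProjection P := isStarProjection_colSpaceProj hA₁'
  obtain ⟨Q, hQ, hQZ, hQtr⟩ := exists_isStarProjection_mul_eq_self (fromCols A₁ X₂)
  obtain ⟨hQA₁, hQX₂⟩ : Q * A₁ = A₁ ∧ Q * X₂ = X₂ := by
    rw [mul_fromCols] at hQZ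
    exact fromCols_inj hQZ
  have hQP : Q * P = P := by
    simp only [P, colSpaceProj, ← Matrix.mul_assoc, hQA₁]
  have htr : (Q - P).trace ≤ (r - k : ℕ) := by
    have hr : (r : ℝ) ≤ ((r - k : ℕ) : ℝ) + k := by exact_mod_cast (by omega : r ≤ r - k + k)
    rw [trace_sub, hQtr, trace_colSpaceProj hA₁', Fintype.card_fin]
    have : ((fromCols A₁ X₂).rank : ℝ) ≤ r := Nat.cast_le.mpr hX₂
    linarith
  have hresidual : (1 - Q) * (A₂ - X₂) = (1 - (Q - P)) * ((1 - P) * A₂) := by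
    have hQX₂' : (1 - Q) * X₂ = 0 := by rw [Matrix.sub_mul, Matrix.one_mul, hQX₂, sub_self]
    have hfactor : (1 - (Q - P)) * (1 - P) = 1 - Q := by
      simp only [Matrix.sub_mul, Matrix.mul_sub, Matrix.one_mul, Matrix.mul_one, hQP,
        hP.isIdempotentElem.eq]
      abel
    rw [Matrix.mul_sub, hQX₂', sub_zero, ← Matrix.mul_assoc, hfactor]
  calc ∑ i : Fin m with r - k ≤ i.val, d i ≤ frobSq ((1 - (Q - P)) * ((1 - P) * A₂)) :=
        sum_tail_le_frobSq_one_sub_mul hU hB hd hd0 (hP.sub_of_mul_eq_right hQ hQP) htr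
    _ = frobSq ((1 - Q) * (A₂ - X₂)) := by rw [hresidual]
    _ ≤ frobSq (A₂ - X₂) := frobSq_mul_le_of_isStarProjection hQ.one_sub _

lemma exists_rank_fromCols_le_frobSq_sub_eq [DecidableEq β] (hA₁ : A₁.rank = k) (hU : Uᵀ * U = 1)
    (hB : ((1 - colSpaceProj A₁) * A₂) * ((1 - colSpaceProj A₁) * A₂)ᵀ = U * diagonal d * Uᵀ)
    {r : ℕ} (hkr : k ≤ r) :
    ∃ X₂ : Matrix (Fin m) β ℝ, (fromCols A₁ X₂).rank ≤ r ∧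
      frobSq (A₂ - X₂) = ∑ i : Fin m with r - k ≤ i.val, d i := by
  set B := (1 - colSpaceProj A₁) * A₂
  refine ⟨colSpaceProj A₁ * A₂ + leadingProj U (r - k) * B, ?_, ?_⟩
  · have hPA₂ : colSpaceProj A₁ * A₂ = A₁ * ((A₁ᵀ * A₁)⁻¹ * A₁ᵀ * A₂) := by
      simp only [colSpaceProj, Matrix.mul_assoc]
    calc (fromCols A₁ (colSpaceProj A₁ * A₂ + leadingProj U (r - k) * B)).rank
        ≤ A₁.rank + (leadingProj U (r - k) * B).rank := by
          rw [hPA₂]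
          exact rank_fromCols_mul_add_le _ _ _
      _ ≤ r := by
          have := rank_leadingProj_mul_le U (r - k) B
          omega
  · rw [← frobSq_one_sub_leadingProj_mul hU hB]
    congr 1
    simp only [B, Matrix.sub_mul, Matrix.one_mul]
    abel

end ConstrainedLowRank

/-- The optimal value of the constrained problem equals
(σ_{r−k+1}² + σ_{r−k+2}² + ⋯)^{1/2}, σ the singular values of P⊥_{A₁}(A₂). -/
theorem stmt3 {m k nk r : ℕ} (hkr : k ≤ r)
    (A₁ : Matrix (Fin m) (Fin k) ℝ) (A₂ : Matrix (Fin m) (Fin nk) ℝ)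
    (hrank : A₁.rank = k)
    (P : Matrix (Fin m) (Fin m) ℝ) (hP : P = A₁ * (A₁ᵀ * A₁)⁻¹ * A₁ᵀ)
    (U : Matrix (Fin m) (Fin m) ℝ) (V : Matrix (Fin nk) (Fin nk) ℝ) (σ : ℕ → ℝ)
    (hU : Uᵀ * U = 1) (hV : Vᵀ * V = 1)
    (hσmono : ∀ i j : ℕ, i ≤ j → σ j ≤ σ i) (hσnonneg : ∀ i, 0 ≤ σ i)
    (S : Matrix (Fin m) (Fin nk) ℝ)
    (hS : ∀ i j, S i j = if (i : ℕ) = (j : ℕ) then σ ((i : ℕ) + 1) else 0)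
    (hSVD : (1 - P) * A₂ = U * S * Vᵀ) :
    IsLeast {c : ℝ | ∃ X₂ : Matrix (Fin m) (Fin nk) ℝ,
        (Matrix.fromCols A₁ X₂).rank ≤ r ∧ c = frob (A₂ - X₂)}
      (Real.sqrt (∑ i ∈ Finset.Icc (r - k + 1) (min m nk), σ i ^ 2)) := by
  set d : Fin m → ℝ := fun i => if i.val < nk then σ (i.val + 1) ^ 2 else 0
  have hB : ((1 - colSpaceProj A₁) * A₂) * ((1 - colSpaceProj A₁) * A₂)ᵀ
      = U * diagonal d * Uᵀ := by
    rw [show colSpaceProj A₁ = P from hP.symm, hSVD, mul_transpose_of_transpose_mul_self U S hV,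
      mul_transpose_eq_diagonal (s := fun n => σ (n + 1)) hS]
  have hd0 : 0 ≤ d := fun i => by
    dsimp only [d]
    split_ifs <;> positivity
  have hd : Antitone d :=
    antitone_ite_sq (fun i j hij => hσmono _ _ (by omega)) (fun i => hσnonneg _)
  rw [← sum_tail_eq_sum_Icc]
  refine ⟨?_, ?_⟩
  · obtain ⟨X₂, hrk, hval⟩ := exists_rank_fromCols_le_frobSq_sub_eq hrank hU hB hkr
    exact ⟨X₂, hrk, by rw [frob, hval]⟩
  · rintro c ⟨X₂, hrk, rfl⟩
    exact Real.sqrt_le_sqrt (sum_tail_le_frobSq_sub hrank hU hB hd hd0 hrk)
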